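/- (Nonvanishing of orthosymplectic Kostka polynomials.) With notation as above (odd case), if $(\lambda_0,\lambda_1) \ge (\mu_0,\mu_1)$, i.e. $(\lambda_0,\lambda_1)-(\mu_0,\mu_1)$ lies in the $\mathbb{N}$-span of $R^{N+}_{\bar 1}$, then $K^N_{(\lambda_0,\lambda_1),(\mu_0,\mu_1)}(q) \neq 0$. More precisely, writing $(\lambda_0,\lambda_1)-(\mu_0,\mu_1)$ as a sum of $d_{\max}$ simple roots of $R^{N+}_{\bar 1}$ (the maximal possible number of summands), the coefficient of $q^{d_{\max}}$ in $K^N_{(\lambda_0,\lambda_1),(\mu_0,\mu_1)}(q)$ is nonzero: the top-degree term of $L^N_{(\lambda_0-\mu_0,\lambda_1-\mu_1)}(q)$ is not cancelled by any summand with $(w_0,w_1) \neq (e,e)$ in the alternating sum defining $K^N$. -/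

import Mathlib

/-!
Let `F` be the linear functional with `F εᵢ = 2ρ₀ᵢ` and `F δⱼ = 2ρ₁ⱼ - 1`. It takes the value `1` on
the simple odd roots and at least `1` on every odd positive root, and every odd positive root is a
sum of simple ones; so the longest decompositions of `α = (λ₀, λ₁) - (μ₀, μ₁)` have exactly `F α`
summands. For `w ≠ e`, a signed rearrangement inequality against the strictly decreasing weights
of `F` gives `F (w (λ + ρ) - ρ - μ) < F α`, so `L` of that weight has no term in degree `F α`, and
the coefficient of `q ^ F α` in `K` is the nonzero partition count of `α` itself.
-/

open Finset

/-- The set of odd positive roots of the mixed Borel of `𝔬𝔰𝔭(2n|2n)` (odd case). -/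
def oddRset (n : ℕ) (M : Type*) [AddCommGroup M] [Module ℚ M]
    (ε δ : Fin n → M) : Set M :=
  {x | ∃ i j : Fin n, x = ε i + δ j} ∪
  {x | ∃ i j : Fin n, i < j ∧ x = ε i - δ j} ∪
  {x | ∃ i j : Fin n, i ≤ j ∧ x = δ i - ε j}

/-- `p_d`: the number of unordered partitions of `α` into a sum of `d` elements of
`Rset` (counted with multiplicity), i.e. the number of multisets of size `d` supported
on `Rset` with sum `α`. This is the coefficient of `q^d` in `L^N_α(q)`. -/
noncomputable def partCount (M : Type*) [AddCommGroup M] (Rset : Set M)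
    (d : ℕ) (α : M) : ℕ :=
  Set.ncard {m : Multiset M | (∀ x ∈ m, x ∈ Rset) ∧ Multiset.card m = d ∧ m.sum = α}

/-- Sign attached to a sign-change datum. -/
def sgnB (b : Bool) : ℚ := if b then -1 else 1

/-- A signed permutation `(σ, ζ)` acting on coordinate vectors. -/
def actSigned (n : ℕ) (σ : Equiv.Perm (Fin n)) (ζ : Fin n → Bool)
    (x : Fin n → ℚ) : Fin n → ℚ :=
  fun i => sgnB (ζ i) * x (σ i)

/-- `ρ₀ = ∑ (n−i) εᵢ` in coordinates (type `Dₙ`), 1-based `i`. -/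
def rho0 (n : ℕ) : Fin n → ℚ := fun i => (n : ℚ) - 1 - (i : ℕ)

/-- `ρ₁ = ∑ (n+1−j) δⱼ` in coordinates (type `Cₙ`), 1-based `j`. -/
def rho1 (n : ℕ) : Fin n → ℚ := fun j => (n : ℚ) - (j : ℕ)

/-- The vector `∑ c₀ᵢ εᵢ + ∑ c₁ⱼ δⱼ`. -/
def vecOf (n : ℕ) (M : Type*) [AddCommGroup M] [Module ℚ M]
    (ε δ : Fin n → M) (c0 c1 : Fin n → ℚ) : M :=
  (∑ i : Fin n, c0 i • ε i) + (∑ j : Fin n, c1 j • δ j)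

/-- The coefficient of `q^d` in the orthosymplectic Kostka polynomial
`K^N_{(λ₀,λ₁),(μ₀,μ₁)}(q)` (odd case), given by the Lusztig–Kato alternating sum over
the Weyl groups `W₀` (type `Dₙ`: signed permutations with evenly many sign changes) and
`W₁` (type `Cₙ`: all signed permutations). -/
noncomputable def ospKostkaCoeff (n : ℕ) (M : Type*) [AddCommGroup M] [Module ℚ M]
    (ε δ : Fin n → M) (l0 l1 m0 m1 : Fin n → ℤ) (d : ℕ) : ℚ :=
  ∑ σ0 : Equiv.Perm (Fin n),
    ∑ ζ0 ∈ Finset.univ.filter (fun ζ : Fin n → Bool => (∏ i, sgnB (ζ i)) = 1),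
      ∑ σ1 : Equiv.Perm (Fin n), ∑ ζ1 : Fin n → Bool,
        ((Equiv.Perm.sign σ0 : ℤ) : ℚ) * ((Equiv.Perm.sign σ1 : ℤ) : ℚ)
          * (∏ i, sgnB (ζ1 i))
          * (partCount M (oddRset n M ε δ) d
              (vecOf n M ε δ
                (fun i => actSigned n σ0 ζ0 (fun t => (l0 t : ℚ) + rho0 n t) i
                  - rho0 n i - (m0 i : ℚ))
                (fun j => actSigned n σ1 ζ1 (fun t => (l1 t : ℚ) + rho1 n t) j
                  - rho1 n j - (m1 j : ℚ))) : ℚ)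

theorem LinearIndependent.exists_linearMap_apply_eq {ι K V : Type*} [Field K] [AddCommGroup V]
    [Module K V] {v : ι → V} (hv : LinearIndependent K v) (w : ι → K) :
    ∃ f : V →ₗ[K] K, ∀ i, f (v i) = w i := by
  obtain ⟨f, hf⟩ := LinearMap.exists_extend ((Module.Basis.span hv).constr K w)
  refine ⟨f, fun i => ?_⟩
  have := LinearMap.congr_fun hf (Module.Basis.span hv i)
  rw [LinearMap.comp_apply, Module.Basis.constr_basis] at this
  simpa [Module.Basis.span_apply] using this

theorem AddSubmonoid.sub_mem_of_le {M : Type*} [AddCommGroup M] (S : AddSubmonoid M) {k : ℕ}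
    {f : Fin (k + 1) → M} (h : ∀ j : Fin k, f j.castSucc - f j.succ ∈ S) {i j : Fin (k + 1)}
    (hij : i ≤ j) : f i - f j ∈ S := by
  induction j using Fin.induction with
  | zero => rw [Fin.le_zero_iff.1 hij, sub_self]; exact S.zero_mem
  | succ j ih =>
    obtain rfl | hlt := hij.eq_or_lt
    · rw [sub_self]; exact S.zero_mem
    · simpa only [sub_add_sub_cancel] using S.add_mem (ih (Fin.le_castSucc_iff.2 hlt)) (h j)

theorem Fin.antitone_of_succ_le {n : ℕ} {α : Type*} [Preorder α] {g : Fin n → α}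
    (h : ∀ i : ℕ, (h : i + 1 < n) → g ⟨i + 1, h⟩ ≤ g ⟨i, Nat.lt_of_succ_lt h⟩) : Antitone g := by
  cases n with
  | zero => exact fun i => i.elim0
  | succ n => exact Fin.antitone_iff_succ_le.2 fun i => h i (by omega)

theorem Equiv.Perm.eq_one_of_monovary {ι α β : Type*} [LinearOrder ι] [Finite ι] [Preorder α]
    [Preorder β] {a : ι → α} {y : ι → β} {σ : Equiv.Perm ι} (ha : StrictAnti a)
    (hy : StrictAnti y) (h : Monovary a (y ∘ σ)) : σ = 1 := by
  have hσ : StrictMono σ := by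
    intro i j hij
    refine (le_of_not_gt fun hji => (ha hij).not_ge (h (hy hji))).lt_of_ne ?_
    exact σ.injective.ne hij.ne
  exact Equiv.ext fun _ => hσ.apply_eq

section PartitionCount

variable {M : Type*} [AddCommGroup M] {R : Set M}

theorem partCount_ne_zero_iff (hR : R.Finite) {d : ℕ} {α : M} :
    partCount M R d α ≠ 0 ↔
      ∃ m : Multiset M, (∀ x ∈ m, x ∈ R) ∧ Multiset.card m = d ∧ m.sum = α := by
  classical
  have hfin : {m : Multiset M | (∀ x ∈ m, x ∈ R) ∧ Multiset.card m = d ∧ m.sum = α}.Finite := by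
    refine ((hR.toFinset.sym d).finite_toSet.image ((↑) : Sym M d → Multiset M)).subset ?_
    rintro m ⟨hmR, hmd, -⟩
    exact ⟨⟨m, hmd⟩, Finset.mem_sym_iff.2 fun x hx => hR.mem_toFinset.2 (hmR x hx), rfl⟩
  rw [partCount, Ne, Set.ncard_eq_zero hfin, ← Ne, ← Set.nonempty_iff_ne_empty]
  rfl

variable {G : Type*} [FunLike G M ℚ] [AddMonoidHomClass G M ℚ] {F : G}

theorem natCast_le_of_partCount_ne_zero (hR : R.Finite) (hF : ∀ r ∈ R, 1 ≤ F r) {d : ℕ} {α : M}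
    (h : partCount M R d α ≠ 0) : (d : ℚ) ≤ F α := by
  obtain ⟨m, hmR, rfl, rfl⟩ := (partCount_ne_zero_iff hR).1 h
  rw [map_multiset_sum]
  have := Multiset.card_nsmul_le_sum (s := m.map F) (by simpa using fun x hx => hF x (hmR x hx))
  simpa using this

theorem exists_partCount_ne_zero (hR : R.Finite) (hgen : R ⊆ AddSubmonoid.closure {r ∈ R | F r = 1})
    {α : M} (hα : α ∈ AddSubmonoid.closure R) :
    ∃ d : ℕ, (d : ℚ) = F α ∧ partCount M R d α ≠ 0 := by
  obtain ⟨m, hm, rfl⟩ := AddSubmonoid.exists_multiset_of_mem_closure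
    (AddSubmonoid.closure_le.2 hgen hα)
  refine ⟨Multiset.card m, ?_, (partCount_ne_zero_iff hR).2 ⟨m, fun x hx => (hm x hx).1, rfl, rfl⟩⟩
  rw [map_multiset_sum, Multiset.map_congr rfl fun x hx => (hm x hx).2]
  simp

theorem isGreatest_partCount (hR : R.Finite) (hF : ∀ r ∈ R, 1 ≤ F r)
    (hgen : R ⊆ AddSubmonoid.closure {r ∈ R | F r = 1}) {α : M}
    (hα : α ∈ AddSubmonoid.closure R) :
    ∃ d : ℕ, (d : ℚ) = F α ∧ IsGreatest {d : ℕ | partCount M R d α ≠ 0} d := by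
  obtain ⟨d, hdF, hd⟩ := exists_partCount_ne_zero hR hgen hα
  refine ⟨d, hdF, hd, fun e he => ?_⟩
  exact_mod_cast (natCast_le_of_partCount_ne_zero hR hF he).trans hdF.ge

end PartitionCount

section Rho

variable {n : ℕ}

theorem rho0_pos_iff {i : Fin n} : 0 < rho0 n i ↔ (i : ℕ) + 1 < n := by
  rw [rho0, sub_sub, sub_pos, add_comm]
  exact_mod_cast Iff.rfl

theorem rho0_nonneg (i : Fin n) : 0 ≤ rho0 n i := by
  have : ((i : ℕ) : ℚ) + 1 ≤ n := by exact_mod_cast i.isLt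
  rw [rho0]; linarith

theorem strictAnti_rho0 : StrictAnti (rho0 n) := fun i j hij => by
  have : ((i : ℕ) : ℚ) < (j : ℕ) := by exact_mod_cast hij
  simp only [rho0]; linarith

theorem one_le_rho1 (i : Fin n) : 1 ≤ rho1 n i := by
  have : ((i : ℕ) : ℚ) + 1 ≤ n := by exact_mod_cast i.isLt
  rw [rho1]; linarith

theorem strictAnti_rho1 : StrictAnti (rho1 n) := fun i j hij => by
  have : ((i : ℕ) : ℚ) < (j : ℕ) := by exact_mod_cast hij
  simp only [rho1]; linarith

end Rho

section SignedRearrangement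

variable {n : ℕ} {a x : Fin n → ℚ} {σ : Equiv.Perm (Fin n)} {ζ : Fin n → Bool}

theorem sgnB_mul_le_abs (b : Bool) (t : ℚ) : sgnB b * t ≤ |t| := by
  cases b
  · simpa [sgnB] using le_abs_self t
  · simpa [sgnB] using neg_le_abs t

theorem actSigned_one (x : Fin n → ℚ) : actSigned n 1 (fun _ => false) x = x := by
  ext i; simp [actSigned, sgnB]

theorem sum_mul_actSigned_le_sum_mul_abs (ha0 : ∀ i, 0 ≤ a i) :
    ∑ i, a i * actSigned n σ ζ x i ≤ ∑ i, a i * |x (σ i)| :=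
  Finset.sum_le_sum fun i _ => mul_le_mul_of_nonneg_left (sgnB_mul_le_abs _ _) (ha0 i)

theorem sum_mul_abs_eq_sum_mul (ha0 : ∀ i, 0 ≤ a i) (hax : ∀ i, 0 < a i → 0 ≤ x i) :
    ∑ i, a i * |x i| = ∑ i, a i * x i := by
  refine Finset.sum_congr rfl fun i _ => ?_
  rcases (ha0 i).eq_or_lt with hai | hai
  · rw [← hai, zero_mul, zero_mul]
  · rw [abs_of_nonneg (hax i hai)]

theorem sum_mul_actSigned_lt (ha : StrictAnti a) (ha0 : ∀ i, 0 ≤ a i)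
    (hx : StrictAnti fun i => |x i|) (hax : ∀ i, 0 < a i → 0 ≤ x i)
    (hw : σ ≠ 1 ∨ ∃ i, ζ i = true ∧ 0 < a i ∧ 0 < x i) :
    ∑ i, a i * actSigned n σ ζ x i < ∑ i, a i * x i := by
  by_cases hσ : σ = 1
  · obtain ⟨i, hζi, hai, hxi⟩ := hw.resolve_left (not_not.2 hσ)
    subst hσ
    calc ∑ i, a i * actSigned n 1 ζ x i < ∑ i, a i * |x i| := by
          refine Finset.sum_lt_sum (fun i _ => ?_) ⟨i, Finset.mem_univ _, ?_⟩
          · exact mul_le_mul_of_nonneg_left (sgnB_mul_le_abs _ _) (ha0 i)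
          · simp only [actSigned, hζi, sgnB, Equiv.Perm.coe_one, id, if_true, abs_of_pos hxi]
            nlinarith
      _ = ∑ i, a i * x i := sum_mul_abs_eq_sum_mul ha0 hax
  · calc ∑ i, a i * actSigned n σ ζ x i ≤ ∑ i, a i * |x (σ i)| :=
          sum_mul_actSigned_le_sum_mul_abs ha0
      _ < ∑ i, a i * |x i| :=
          (ha.antitone.monovary hx.antitone).sum_mul_comp_perm_lt_sum_mul_iff.2
            fun h => hσ (Equiv.Perm.eq_one_of_monovary ha hx h)
      _ = ∑ i, a i * x i := sum_mul_abs_eq_sum_mul ha0 hax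

end SignedRearrangement

theorem exists_ne_of_prod_sgnB_eq_one {ι : Type*} [Fintype ι] [DecidableEq ι] {ζ : ι → Bool}
    (hζ : ∏ i, sgnB (ζ i) = 1) {k : ι} (hk : ζ k = true) : ∃ i ≠ k, ζ i = true := by
  by_contra! h
  rw [Finset.prod_eq_single k (fun i _ hik => by simp [h i hik, sgnB]) (by simp), hk] at hζ
  norm_num [sgnB] at hζ

theorem abs_le_of_lt_of_neg_last_le {n : ℕ} {α : Type*} [AddCommGroup α] [LinearOrder α]
    [IsOrderedAddMonoid α] {l : Fin n → α} (hl : Antitone l)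
    (hlast : ∀ h2 : 2 ≤ n, -l ⟨n - 1, Nat.sub_lt (Nat.zero_lt_of_lt h2) Nat.one_pos⟩
      ≤ l ⟨n - 2, Nat.sub_lt (Nat.zero_lt_of_lt h2) Nat.two_pos⟩) {i j : Fin n}
    (hij : i < j) : |l j| ≤ l i := by
  have hij' := Fin.lt_def.1 hij
  refine abs_le.2 ⟨?_, hl hij.le⟩
  calc -l i ≤ -l ⟨n - 2, by omega⟩ := neg_le_neg (hl (Fin.le_def.2 (by simp only; omega)))
    _ ≤ l ⟨n - 1, by omega⟩ := neg_le.1 (hlast (by omega))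
    _ ≤ l j := hl (Fin.le_def.2 (by simp only; omega))

section TypeD

variable {n : ℕ} {l : Fin n → ℚ} (hl : ∀ i j : Fin n, i < j → |l j| ≤ l i)
include hl

theorem add_rho0_pos {i : Fin n} (hi : (i : ℕ) + 1 < n) : 0 < l i + rho0 n i := by
  have := hl i ⟨n - 1, by omega⟩ (Fin.lt_def.2 (by simp only; omega))
  linarith [abs_nonneg (l ⟨n - 1, by omega⟩), rho0_pos_iff.2 hi]

theorem strictAnti_abs_add_rho0 : StrictAnti fun i => |l i + rho0 n i| := fun i j hij => by
  calc |l j + rho0 n j| ≤ |l j| + rho0 n j := by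
        simpa [abs_of_nonneg (rho0_nonneg j)] using abs_add_le (l j) (rho0 n j)
    _ < l i + rho0 n i := by linarith [hl i j hij, strictAnti_rho0 hij]
    _ ≤ |l i + rho0 n i| := le_abs_self _

variable {σ : Equiv.Perm (Fin n)} {ζ : Fin n → Bool}

/-- An even number of sign changes cannot be concentrated on the last coordinate, the only one
where the weight `rho0` vanishes. -/
theorem sum_rho0_mul_actSigned_lt (hζ : ∏ i, sgnB (ζ i) = 1)
    (hw : ¬(σ = 1 ∧ ζ = fun _ => false)) :
    ∑ i, 2 * rho0 n i * actSigned n σ ζ (fun t => l t + rho0 n t) i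
      < ∑ i, 2 * rho0 n i * (l i + rho0 n i) := by
  refine sum_mul_actSigned_lt (strictAnti_rho0.const_mul two_pos)
    (fun i => by linarith [rho0_nonneg i]) (strictAnti_abs_add_rho0 hl)
    (fun i hi => (add_rho0_pos hl (rho0_pos_iff.1 (by linarith))).le) ?_
  refine or_iff_not_imp_left.2 fun hσ => ?_
  obtain ⟨k, hk⟩ := Function.ne_iff.1 fun h => hw ⟨not_not.1 hσ, h⟩
  obtain ⟨i, hik, hi⟩ := exists_ne_of_prod_sgnB_eq_one hζ (eq_true_of_ne_false hk)
  obtain ⟨p, hp, hpn⟩ : ∃ p : Fin n, ζ p = true ∧ (p : ℕ) + 1 < n := by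
    rcases hik.lt_or_gt with h | h
    · exact ⟨i, hi, by have := Fin.lt_def.1 h; omega⟩
    · exact ⟨k, eq_true_of_ne_false hk, by have := Fin.lt_def.1 h; omega⟩
  exact ⟨p, hp, by linarith [rho0_pos_iff.2 hpn], add_rho0_pos hl hpn⟩

end TypeD

section TypeC

variable {n : ℕ} {l : Fin n → ℚ} (hl : Antitone l) (hl_nonneg : ∀ i, 0 ≤ l i)
  {σ : Equiv.Perm (Fin n)} {ζ : Fin n → Bool}
include hl hl_nonneg

theorem sum_rho1_mul_actSigned_lt (hw : ¬(σ = 1 ∧ ζ = fun _ => false)) :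
    ∑ i, (2 * rho1 n i - 1) * actSigned n σ ζ (fun t => l t + rho1 n t) i
      < ∑ i, (2 * rho1 n i - 1) * (l i + rho1 n i) := by
  have hpos : ∀ i, 0 < 2 * rho1 n i - 1 := fun i => by linarith [one_le_rho1 i]
  have hx : StrictAnti fun i => l i + rho1 n i := hl.add_strictAnti strictAnti_rho1
  have hxpos : ∀ i, 0 < l i + rho1 n i := fun i => by linarith [hl_nonneg i, one_le_rho1 i]
  refine sum_mul_actSigned_lt (fun i j hij => by linarith [strictAnti_rho1 hij])
    (fun i => (hpos i).le) (by simpa only [abs_of_pos (hxpos _)] using hx) (fun i _ => (hxpos i).le) ?_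
  refine or_iff_not_imp_left.2 fun hσ => ?_
  obtain ⟨k, hk⟩ := Function.ne_iff.1 fun h => hw ⟨not_not.1 hσ, h⟩
  exact ⟨k, eq_true_of_ne_false hk, hpos k, hxpos k⟩

end TypeC

section OddRoots

variable {n : ℕ} {M : Type*} [AddCommGroup M] [Module ℚ M] {ε δ : Fin n → M}

theorem oddRset_finite : (oddRset n M ε δ).Finite := by
  refine ((Set.finite_range fun p : Fin n × Fin n => ε p.1 + δ p.2).union
    ((Set.finite_range fun p : Fin n × Fin n => ε p.1 - δ p.2).union
      (Set.finite_range fun p : Fin n × Fin n => δ p.1 - ε p.2))).subset ?_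
  rintro _ (⟨⟨i, j, rfl⟩ | ⟨i, j, -, rfl⟩⟩ | ⟨i, j, -, rfl⟩)
  exacts [Or.inl ⟨(i, j), rfl⟩, Or.inr (Or.inl ⟨(i, j), rfl⟩), Or.inr (Or.inr ⟨(i, j), rfl⟩)]

variable {G : Type*} [FunLike G M ℚ] [AddMonoidHomClass G M ℚ] {F : G}
  (hFε : ∀ i, F (ε i) = 2 * rho0 n i) (hFδ : ∀ j, F (δ j) = 2 * rho1 n j - 1)
include hFε hFδ

theorem one_le_of_mem_oddRset {r : M} (hr : r ∈ oddRset n M ε δ) : 1 ≤ F r := by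
  rcases hr with ⟨⟨i, j, rfl⟩ | ⟨i, j, hij, rfl⟩⟩ | ⟨i, j, hij, rfl⟩
  · have hi : ((i : ℕ) : ℚ) + 1 ≤ n := by exact_mod_cast i.isLt
    have hj : ((j : ℕ) : ℚ) + 1 ≤ n := by exact_mod_cast j.isLt
    simp only [map_add, hFε, hFδ, rho0, rho1]
    linarith
  · have : ((i : ℕ) : ℚ) + 1 ≤ (j : ℕ) := by exact_mod_cast Fin.lt_def.1 hij
    simp only [map_sub, hFε, hFδ, rho0, rho1]
    linarith
  · have : ((i : ℕ) : ℚ) ≤ (j : ℕ) := by exact_mod_cast Fin.le_def.1 hij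
    simp only [map_sub, hFε, hFδ, rho0, rho1]
    linarith

/-- The roots of height one are the simple roots `δ i - ε i`, `ε i - δ (i + 1)` and
`ε last + δ last`; the others are reached through the chains `ε i - ε j` and `δ i - δ j`. -/
theorem oddRset_subset_closure :
    oddRset n M ε δ ⊆ AddSubmonoid.closure {r ∈ oddRset n M ε δ | F r = 1} := by
  cases n with
  | zero => rintro _ (⟨⟨i, -⟩ | ⟨i, -⟩⟩ | ⟨i, -⟩) <;> exact i.elim0
  | succ k =>
  set S := AddSubmonoid.closure {r ∈ oddRset (k + 1) M ε δ | F r = 1}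
  have hδε : ∀ i, δ i - ε i ∈ S := fun i => AddSubmonoid.subset_closure
    ⟨Or.inr ⟨i, i, le_rfl, rfl⟩, by simp only [map_sub, hFε, hFδ, rho0, rho1]; ring⟩
  have hεδ : ∀ j : Fin k, ε j.castSucc - δ j.succ ∈ S := fun j => AddSubmonoid.subset_closure
    ⟨Or.inl (Or.inr ⟨_, _, Fin.castSucc_lt_succ, rfl⟩), by
      simp only [map_sub, hFε, hFδ, rho0, rho1, Fin.val_castSucc, Fin.val_succ]; push_cast; ring⟩
  have htop : ε (Fin.last k) + δ (Fin.last k) ∈ S := AddSubmonoid.subset_closure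
    ⟨Or.inl (Or.inl ⟨_, _, rfl⟩), by
      simp only [map_add, hFε, hFδ, rho0, rho1, Fin.val_last]; push_cast; ring⟩
  have hεε : ∀ {i j}, i ≤ j → ε i - ε j ∈ S := S.sub_mem_of_le fun j => by
    simpa only [sub_add_sub_cancel] using S.add_mem (hεδ j) (hδε j.succ)
  have hδδ : ∀ {i j}, i ≤ j → δ i - δ j ∈ S := S.sub_mem_of_le fun j => by
    simpa only [sub_add_sub_cancel] using S.add_mem (hδε j.castSucc) (hεδ j)
  rintro _ (⟨⟨i, j, rfl⟩ | ⟨i, j, hij, rfl⟩⟩ | ⟨i, j, hij, rfl⟩) <;> rw [SetLike.mem_coe]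
  · have := S.add_mem (S.add_mem (hεε (Fin.le_last i)) (hδδ (Fin.le_last j))) htop
    rwa [show ε i - ε (Fin.last k) + (δ j - δ (Fin.last k)) + (ε (Fin.last k) + δ (Fin.last k))
      = ε i + δ j by abel] at this
  · obtain ⟨j, rfl⟩ := Fin.exists_succ_eq_of_ne_zero (Fin.ne_zero_of_lt hij)
    simpa only [sub_add_sub_cancel] using S.add_mem (hεε (Fin.le_castSucc_iff.2 hij)) (hεδ j)
  · simpa only [sub_add_sub_cancel] using S.add_mem (hδδ hij) (hδε j)

end OddRoots

section Kostka

variable {n : ℕ} {M : Type*} [AddCommGroup M] [Module ℚ M] {ε δ : Fin n → M}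
  {l0 l1 m0 m1 : Fin n → ℤ}

/-- `w (λ + ρ) - ρ - μ` for `w = ((σ0, ζ0), (σ1, ζ1)) ∈ W₀ × W₁`: the weight whose partition
count is the `w`-summand of `ospKostkaCoeff`. -/
def kostkaArg (n : ℕ) (M : Type*) [AddCommGroup M] [Module ℚ M] (ε δ : Fin n → M)
    (l0 l1 m0 m1 : Fin n → ℤ) (σ0 : Equiv.Perm (Fin n)) (ζ0 : Fin n → Bool)
    (σ1 : Equiv.Perm (Fin n)) (ζ1 : Fin n → Bool) : M :=
  vecOf n M ε δ
    (fun i => actSigned n σ0 ζ0 (fun t => (l0 t : ℚ) + rho0 n t) i - rho0 n i - (m0 i : ℚ))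
    (fun j => actSigned n σ1 ζ1 (fun t => (l1 t : ℚ) + rho1 n t) j - rho1 n j - (m1 j : ℚ))

theorem kostkaArg_one :
    kostkaArg n M ε δ l0 l1 m0 m1 1 (fun _ => false) 1 (fun _ => false)
      = (∑ i, (l0 i - m0 i) • ε i) + ∑ j, (l1 j - m1 j) • δ j := by
  simp only [kostkaArg, vecOf, actSigned_one, add_sub_cancel_right, ← Int.cast_sub,
    Int.cast_smul_eq_zsmul]

theorem ospKostkaCoeff_eq_partCount {d : ℕ}
    (h : ∀ σ0 ζ0 σ1 ζ1, ∏ i, sgnB (ζ0 i) = 1 →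
      ¬(σ0 = 1 ∧ ζ0 = (fun _ => false) ∧ σ1 = 1 ∧ ζ1 = fun _ => false) →
      partCount M (oddRset n M ε δ) d (kostkaArg n M ε δ l0 l1 m0 m1 σ0 ζ0 σ1 ζ1) = 0) :
    ospKostkaCoeff n M ε δ l0 l1 m0 m1 d = partCount M (oddRset n M ε δ) d
      (kostkaArg n M ε δ l0 l1 m0 m1 1 (fun _ => false) 1 (fun _ => false)) := by
  have hζ1 : ∏ _i : Fin n, sgnB false = 1 := by simp [sgnB]
  change ∑ σ0 : Equiv.Perm (Fin n), ∑ ζ0 ∈ Finset.univ.filter (fun ζ => ∏ i, sgnB (ζ i) = 1),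
    ∑ σ1 : Equiv.Perm (Fin n), ∑ ζ1 : Fin n → Bool,
      ((Equiv.Perm.sign σ0 : ℤ) : ℚ) * ((Equiv.Perm.sign σ1 : ℤ) : ℚ) * (∏ i, sgnB (ζ1 i))
        * (partCount M (oddRset n M ε δ) d (kostkaArg n M ε δ l0 l1 m0 m1 σ0 ζ0 σ1 ζ1) : ℚ) = _
  rw [Finset.sum_eq_single_of_mem 1 (Finset.mem_univ _) fun σ0 _ hσ0 =>
      Finset.sum_eq_zero fun ζ0 hζ0 => Finset.sum_eq_zero fun σ1 _ => Finset.sum_eq_zero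
        fun ζ1 _ => by
          simp [h σ0 ζ0 σ1 ζ1 (Finset.mem_filter.1 hζ0).2 fun hc => hσ0 hc.1],
    Finset.sum_eq_single_of_mem (fun _ => false) (Finset.mem_filter.2 ⟨Finset.mem_univ _, hζ1⟩)
      fun ζ0 hζ0 hζ0' => Finset.sum_eq_zero fun σ1 _ => Finset.sum_eq_zero fun ζ1 _ => by
        simp [h 1 ζ0 σ1 ζ1 (Finset.mem_filter.1 hζ0).2 fun hc => hζ0' hc.2.1],
    Finset.sum_eq_single_of_mem 1 (Finset.mem_univ _) fun σ1 _ hσ1 =>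
      Finset.sum_eq_zero fun ζ1 _ => by
        simp [h 1 _ σ1 ζ1 hζ1 fun hc => hσ1 hc.2.2.1],
    Finset.sum_eq_single_of_mem (fun _ => false) (Finset.mem_univ _) fun ζ1 _ hζ1' => by
        simp [h 1 _ 1 ζ1 hζ1 fun hc => hζ1' hc.2.2.2]]
  simp [sgnB]

theorem map_vecOf (F : M →ₗ[ℚ] ℚ) (c0 c1 : Fin n → ℚ) :
    F (vecOf n M ε δ c0 c1) = ∑ i, F (ε i) * c0 i + ∑ j, F (δ j) * c1 j := by
  simp [vecOf, map_sum, mul_comm]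

theorem height_kostkaArg_lt (F : M →ₗ[ℚ] ℚ) (hFε : ∀ i, F (ε i) = 2 * rho0 n i)
    (hFδ : ∀ j, F (δ j) = 2 * rho1 n j - 1) (hl0 : ∀ i j : Fin n, i < j → |l0 j| ≤ l0 i)
    (hl1 : Antitone l1) (hl1' : ∀ i, 0 ≤ l1 i) {σ0 σ1 : Equiv.Perm (Fin n)}
    {ζ0 ζ1 : Fin n → Bool} (hζ0 : ∏ i, sgnB (ζ0 i) = 1)
    (hw : ¬(σ0 = 1 ∧ ζ0 = (fun _ => false) ∧ σ1 = 1 ∧ ζ1 = fun _ => false)) :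
    F (kostkaArg n M ε δ l0 l1 m0 m1 σ0 ζ0 σ1 ζ1)
      < F (kostkaArg n M ε δ l0 l1 m0 m1 1 (fun _ => false) 1 (fun _ => false)) := by
  have hD : (σ0 = 1 ∧ ζ0 = fun _ => false) ∨
      ∑ i, 2 * rho0 n i * actSigned n σ0 ζ0 (fun t => (l0 t : ℚ) + rho0 n t) i
        < ∑ i, 2 * rho0 n i * ((l0 i : ℚ) + rho0 n i) :=
    or_iff_not_imp_left.2 <|
      sum_rho0_mul_actSigned_lt (fun i j h => by exact_mod_cast hl0 i j h) hζ0
  have hC : (σ1 = 1 ∧ ζ1 = fun _ => false) ∨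
      ∑ i, (2 * rho1 n i - 1) * actSigned n σ1 ζ1 (fun t => (l1 t : ℚ) + rho1 n t) i
        < ∑ i, (2 * rho1 n i - 1) * ((l1 i : ℚ) + rho1 n i) :=
    or_iff_not_imp_left.2 <| sum_rho1_mul_actSigned_lt (fun i j h => by exact_mod_cast hl1 h)
      (fun i => by exact_mod_cast hl1' i)
  simp only [kostkaArg, map_vecOf, hFε, hFδ, mul_sub, Finset.sum_sub_distrib, actSigned_one]
  rcases hD with ⟨rfl, rfl⟩ | hD <;> rcases hC with ⟨rfl, rfl⟩ | hC
  · exact absurd ⟨rfl, rfl, rfl, rfl⟩ hw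
  all_goals simp only [actSigned_one] at *; linarith

end Kostka

/-- Nonvanishing of orthosymplectic Kostka polynomials: if `(λ₀,λ₁) ≥ (μ₀,μ₁)` (the
difference lies in the ℕ-span of the odd positive roots), then
`K^N_{(λ₀,λ₁),(μ₀,μ₁)}(q) ≠ 0`; more precisely, its coefficient in the maximal degree
`d_max` (the maximal number of summands in a decomposition of the difference into odd
positive roots) is nonzero. -/
theorem ospKostka_ne_zero_of_le
    (n : ℕ) (M : Type*) [AddCommGroup M] [Module ℚ M]
    (ε δ : Fin n → M) (hli : LinearIndependent ℚ (Sum.elim ε δ))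
    (l0 l1 m0 m1 : Fin n → ℤ)
    (hl0 : ∀ i : ℕ, (h : i + 1 < n) → l0 ⟨i + 1, h⟩ ≤ l0 ⟨i, by omega⟩)
    (hl0' : ∀ _h2 : 2 ≤ n, -l0 ⟨n - 1, by omega⟩ ≤ l0 ⟨n - 2, by omega⟩)
    (hl1 : ∀ i : ℕ, (h : i + 1 < n) → l1 ⟨i + 1, h⟩ ≤ l1 ⟨i, by omega⟩)
    (hl1' : ∀ i, 0 ≤ l1 i)
    (hge : (∑ i : Fin n, (l0 i - m0 i) • ε i) + (∑ j : Fin n, (l1 j - m1 j) • δ j)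
        ∈ AddSubmonoid.closure (oddRset n M ε δ)) :
    (∃ d : ℕ, ospKostkaCoeff n M ε δ l0 l1 m0 m1 d ≠ 0) ∧
    (∃ dmax : ℕ,
      IsGreatest {d : ℕ | partCount M (oddRset n M ε δ) d
          ((∑ i : Fin n, (l0 i - m0 i) • ε i)
            + (∑ j : Fin n, (l1 j - m1 j) • δ j)) ≠ 0} dmax ∧
      ospKostkaCoeff n M ε δ l0 l1 m0 m1 dmax ≠ 0) := by
  obtain ⟨F, hF⟩ := hli.exists_linearMap_apply_eq
    (Sum.elim (fun i => 2 * rho0 n i) fun j => 2 * rho1 n j - 1)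
  have hFε : ∀ i, F (ε i) = 2 * rho0 n i := fun i => hF (.inl i)
  have hFδ : ∀ j, F (δ j) = 2 * rho1 n j - 1 := fun j => hF (.inr j)
  have hroot : ∀ r ∈ oddRset n M ε δ, 1 ≤ F r := fun _ => one_le_of_mem_oddRset hFε hFδ
  obtain ⟨d, hdF, hd⟩ := isGreatest_partCount oddRset_finite hroot
    (oddRset_subset_closure hFε hFδ) hge
  have hK : ospKostkaCoeff n M ε δ l0 l1 m0 m1 d = partCount M (oddRset n M ε δ) d
      ((∑ i, (l0 i - m0 i) • ε i) + ∑ j, (l1 j - m1 j) • δ j) := by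
    rw [ospKostkaCoeff_eq_partCount, kostkaArg_one]
    intro σ0 ζ0 σ1 ζ1 hζ0 hw
    by_contra hne
    have hlt := height_kostkaArg_lt F hFε hFδ
      (fun i j => abs_le_of_lt_of_neg_last_le (Fin.antitone_of_succ_le hl0) hl0')
      (Fin.antitone_of_succ_le hl1) hl1' (m0 := m0) (m1 := m1) hζ0 hw
    rw [kostkaArg_one, ← hdF] at hlt
    exact hlt.not_ge (natCast_le_of_partCount_ne_zero oddRset_finite hroot hne)
  have hne : ospKostkaCoeff n M ε δ l0 l1 m0 m1 d ≠ 0 := by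
    rw [hK]; exact_mod_cast hd.1
  exact ⟨⟨d, hne⟩, d, hd, hne⟩
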